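/- arXiv:1012.4054 — 2 statements merged into one kernel-verified Lean document; each statement's English description precedes it below -/
import Mathlib

section
/- Let w ∈ S_n be an h-permissible filling of the one-row diagram for a Hessenberg function h, and let DP be its set of dimension pairs. Then DP is a subset of the set of inversions of w; consequently, if x_ℓ denotes the number of dimension pairs of w with top part ℓ, then the associated permutation ω(x) is less than or equal to w in Bruhat order. -/
/-!
Dimension pairs are inversions by definition, so `x_ℓ` is at most the number of inversions of `w`
with top letter `ℓ`; it suffices to prove `ω(x) ≤ w` for every such `x`. Induct on the largest
letter `ℓ` moved by `w`, and then on the number `X = ℓ - P` of inversions it tops, `P` being its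
position. If `X > 0`, then `w = w' s_P` where `w'` carries `ℓ` at position `P + 1` and is shorter
than `w`; `w'` has one inversion topped by `ℓ` fewer and all other counts unchanged. If `x_ℓ < X`,
induction gives `ω(x) ≤ w' ≤ w`. If `x_ℓ = X`, the last factor of `u_ℓ(x)` is exactly `s_P`, so
`ω(x) = ω(x') s_P` with `ω(x') ≤ w'` by induction, and the lifting property of the Bruhat order
yields `ω(x') s_P ≤ w' s_P = w`.
-/

open Equiv Finset

/-- The simple transposition `s_i = (i, i+1)` (1-indexed letters), as a
permutation of `Fin n` (0-indexed letters `i-1`, `i`). -/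
def sT (n : ℕ) [NeZero n] (i : ℕ) : Equiv.Perm (Fin n) :=
  Equiv.swap (Fin.ofNat n (i - 1 : ℕ)) (Fin.ofNat n (i : ℕ))

/-- The Bruhat length of a permutation: its number of inversions. -/
def lenP (n : ℕ) (w : Equiv.Perm (Fin n)) : ℕ :=
  (Finset.univ.filter (fun p : Fin n × Fin n => p.1 < p.2 ∧ w p.2 < w p.1)).card

/-- Bruhat order on `S_n`: the reflexive-transitive closure of
"multiply on the right by a transposition and increase length". -/
def bruhatLE (n : ℕ) (u w : Equiv.Perm (Fin n)) : Prop :=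
  Relation.ReflTransGen
    (fun a b => (∃ i j : Fin n, i ≠ j ∧ b = a * Equiv.swap i j) ∧ lenP n a < lenP n b) u w

/-- `u_ℓ(x) = s_{ℓ-1} s_{ℓ-2} ⋯ s_{ℓ-x_ℓ}` (identity if `x_ℓ = 0`). -/
def uPerm (n : ℕ) [NeZero n] (ℓ m : ℕ) : Equiv.Perm (Fin n) :=
  ((List.range m).map (fun t => sT n (ℓ - 1 - t))).prod

/-- `ω(x) = u_2(x) u_3(x) ⋯ u_n(x)`. -/
def omegaPerm (n : ℕ) [NeZero n] (x : ℕ → ℕ) : Equiv.Perm (Fin n) :=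
  ((List.range (n - 1)).map (fun k => uPerm n (k + 2) (x (k + 2)))).prod

/-- A permutation `w ∈ S_n`, viewed as a filling of the one-row diagram with
`n` boxes via its one-line notation `(w(1), …, w(n))` (letters `1, …, n`
encoded as `Fin n`), is `h`-permissible if every horizontal adjacency with `k`
immediately left of `j` satisfies `k ≤ h(j)`. -/
def IsPermissible (n : ℕ) (h : ℕ → ℕ) (w : Equiv.Perm (Fin n)) : Prop :=
  ∀ i : Fin n, ∀ hi : (i : ℕ) + 1 < n,
    (w i : ℕ) + 1 ≤ h ((w ⟨(i : ℕ) + 1, hi⟩ : ℕ) + 1)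

/-- The 334-type Hessenberg function: `h(1) = h(2) = 3`, `h(i) = i + 1` for
`3 ≤ i ≤ n - 1`, and `h(n) = n`. -/
def h334 (n i : ℕ) : ℕ := if i ≤ 2 then 3 else min (i + 1) n

/-- The Peterson Hessenberg function: `h'(i) = i + 1` for `i ≤ n - 1`,
`h'(n) = n`. -/
def hPet (n i : ℕ) : ℕ := min (i + 1) n

/-- The one-line notation of `w ∈ S_n`, as a list of the letters `1, …, n`. -/
def oneLine (n : ℕ) (w : Equiv.Perm (Fin n)) : List ℕ :=
  List.ofFn fun i : Fin n => (w i : ℕ) + 1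

/-- A decreasing staircase: each entry is exactly one less than the previous. -/
def IsDecStair (l : List ℕ) : Prop := List.Chain' (fun a b => b + 1 = a) l

/-- An increasing sequence of (nonempty) decreasing staircases: a concatenation
of decreasing staircase blocks in which every entry of each block is smaller
than every entry of every later block. -/
def IsIncStaircases (l : List ℕ) : Prop :=
  ∃ blocks : List (List ℕ), l = blocks.flatten ∧
    (∀ b ∈ blocks, b ≠ [] ∧ IsDecStair b) ∧
    List.Pairwise (fun b1 b2 => ∀ a ∈ b1, ∀ c ∈ b2, a < c) blocks

/-- `(a, b)` is a dimension pair of the filling `w` (letters encoded in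
`Fin n`): `b > a`, `b` appears to the left of `a` in one-line notation, and if
`c` is the entry directly to the right of `a` then `b ≤ h(c)`. -/
def DimPair (n : ℕ) (h : ℕ → ℕ) (w : Equiv.Perm (Fin n)) (a b : Fin n) : Prop :=
  a < b ∧ w⁻¹ b < w⁻¹ a ∧
    ∀ hc : (w⁻¹ a : ℕ) + 1 < n, (b : ℕ) + 1 ≤ h ((w ⟨(w⁻¹ a : ℕ) + 1, hc⟩ : ℕ) + 1)

variable {n : ℕ}

lemma swap_lt_swap_iff_of_adjacent {s₁ s₂ a b : Fin n} (hs : (s₁ : ℕ) + 1 = s₂)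
    (h₁ : ¬(a = s₁ ∧ b = s₂)) (h₂ : ¬(a = s₂ ∧ b = s₁)) :
    swap s₁ s₂ a < swap s₁ s₂ b ↔ a < b := by
  simp only [swap_apply_def]
  split_ifs <;> simp only [Fin.lt_def, Fin.ext_iff] at * <;> omega

lemma swap_apply_lt_swap_apply_cases {i j a b : Fin n} (hij : i < j) (hab : a < b)
    (h : swap i j b < swap i j a) :
    (a = i ∧ b = j) ∨ (a = i ∧ b < j) ∨ (i < a ∧ b = j) := by
  simp only [swap_apply_def] at h
  split_ifs at h <;> simp only [Fin.lt_def, Fin.ext_iff] at * <;> omega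

def swapPairIfLt {α : Type*} [LinearOrder α] (i j : α) (p : α × α) : α × α :=
  if swap i j p.1 < swap i j p.2 then (swap i j p.1, swap i j p.2) else p

lemma injOn_swapPairIfLt {α : Type*} [LinearOrder α] (i j : α) :
    Set.InjOn (swapPairIfLt i j) {p | p.1 < p.2} := by
  rintro ⟨a, b⟩ (hab : a < b) ⟨c, d⟩ (hcd : c < d) he
  simp only [swapPairIfLt] at he
  split_ifs at he with h₁ h₂ h₂
  · simpa using he
  · simp only [Prod.mk.injEq] at he
    exact (h₂ (by simpa [← he.1, ← he.2] using hab)).elim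
  · simp only [Prod.mk.injEq] at he
    exact (h₁ (by simpa [he.1, he.2] using hcd)).elim
  · exact he

lemma swapPairIfLt_mem_inversions {w : Perm (Fin n)} {i j a b : Fin n} (hij : i < j)
    (hw : w i < w j) (hab : a < b) (hba : w b < w a) :
    let p := swapPairIfLt i j (a, b)
    p.1 < p.2 ∧ (w * swap i j) p.2 < (w * swap i j) p.1 := by
  by_cases h : swap i j a < swap i j b
  · simpa [swapPairIfLt, h] using hba
  · simp only [swapPairIfLt, h, if_false, Perm.mul_apply]
    refine ⟨hab, ?_⟩
    rcases swap_apply_lt_swap_apply_cases hij hab (not_lt.mp h |>.lt_of_ne (by simpa using hab.ne'))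
      with ⟨rfl, rfl⟩ | ⟨rfl, hbj⟩ | ⟨hia, rfl⟩
    · exact absurd hw hba.not_gt
    · rw [swap_apply_left, swap_apply_of_ne_of_ne hab.ne' hbj.ne]
      exact hba.trans hw
    · rw [swap_apply_right, swap_apply_of_ne_of_ne hia.ne' hab.ne]
      exact hw.trans hba

lemma lenP_lt_lenP_mul_swap {w : Perm (Fin n)} {i j : Fin n} (hij : i < j) (hw : w i < w j) :
    lenP n w < lenP n (w * swap i j) := by
  -- `swapPairIfLt i j` injects the inversions of `w` into those of `w * swap i j` but `(i, j)`
  unfold lenP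
  rw [← card_image_of_injOn ((injOn_swapPairIfLt i j).mono fun p hp => (mem_filter.mp hp).2.1)]
  refine card_lt_card ((ssubset_iff_of_subset ?_).mpr ⟨(i, j), ?_, ?_⟩)
  · intro q hq
    obtain ⟨⟨a, b⟩, hp, rfl⟩ := mem_image.mp hq
    simp only [mem_filter, mem_univ, true_and] at hp ⊢
    exact swapPairIfLt_mem_inversions hij hw hp.1 hp.2
  · exact mem_filter.mpr ⟨mem_univ _, hij, by simpa using hw⟩
  · intro hq
    obtain ⟨⟨a, b⟩, hp, he⟩ := mem_image.mp hq
    simp only [mem_filter, mem_univ, true_and] at hp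
    by_cases h : swap i j a < swap i j b
    · simp only [swapPairIfLt, h, if_true, Prod.mk.injEq] at he
      have ha : a = j := by simpa using congrArg (swap i j) he.1
      have hb : b = i := by simpa using congrArg (swap i j) he.2
      exact (ha ▸ hb ▸ hp.1).not_gt hij
    · simp only [swapPairIfLt, h, if_false, Prod.mk.injEq] at he
      obtain ⟨rfl, rfl⟩ := he
      exact hw.not_gt hp.2

lemma lt_of_lenP_lt_lenP_mul_swap {x : Perm (Fin n)} {i j : Fin n} (hij : i < j)
    (hlen : lenP n x < lenP n (x * swap i j)) : x i < x j := by
  refine lt_of_le_of_ne (not_lt.mp fun hji => ?_) (x.injective.ne hij.ne)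
  have := lenP_lt_lenP_mul_swap (w := x * swap i j) hij (by simpa using hji)
  rw [mul_swap_mul_self] at this
  exact this.not_gt hlen

lemma bruhatLE_mul_swap_or_of_lenP_lt {x : Perm (Fin n)} {i j s₁ s₂ : Fin n} (hij : i < j)
    (hlen : lenP n x < lenP n (x * swap i j)) (hs : (s₁ : ℕ) + 1 = s₂) :
    bruhatLE n (x * swap s₁ s₂) (x * swap i j) ∨
      bruhatLE n (x * swap s₁ s₂) (x * swap i j * swap s₁ s₂) := by
  by_cases hsij : i = s₁ ∧ j = s₂
  · obtain ⟨rfl, rfl⟩ := hsij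
    exact .inl .refl
  set s := swap s₁ s₂
  have hconj : x * s * swap (s i) (s j) = x * swap i j * s := by
    simp [s, swap_apply_apply, mul_assoc]
  have hlt : s i < s j :=
    (swap_lt_swap_iff_of_adjacent hs hsij fun h => (h.2 ▸ h.1 ▸ hij).not_gt (by omega)).mpr hij
  refine .inr (.single ⟨⟨_, _, hlt.ne, hconj.symm⟩, ?_⟩)
  rw [← hconj]
  exact lenP_lt_lenP_mul_swap hlt (by simpa [s] using lt_of_lenP_lt_lenP_mul_swap hij hlen)

lemma bruhatLE.trans_mul_swap {u v : Perm (Fin n)} (h : bruhatLE n u v) {i j : Fin n}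
    (hij : i ≠ j) (hlen : lenP n v < lenP n (v * swap i j)) : bruhatLE n u (v * swap i j) :=
  Relation.ReflTransGen.tail h ⟨⟨i, j, hij, rfl⟩, hlen⟩

/-- The lifting property of the Bruhat order, for an adjacent transposition. -/
lemma bruhatLE.mul_swap_or {u w : Perm (Fin n)} (h : bruhatLE n u w) {s₁ s₂ : Fin n}
    (hs : (s₁ : ℕ) + 1 = s₂) :
    bruhatLE n (u * swap s₁ s₂) w ∨ bruhatLE n (u * swap s₁ s₂) (w * swap s₁ s₂) := by
  induction h with
  | refl => exact .inr .refl
  | tail _ hvw ih =>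
    obtain ⟨⟨i, j, hij, rfl⟩, hlen⟩ := hvw
    rcases ih with ih | ih
    · exact .inl (ih.trans_mul_swap hij hlen)
    · rcases hij.lt_or_gt with hij | hij
      · exact (bruhatLE_mul_swap_or_of_lenP_lt hij hlen hs).imp ih.trans ih.trans
      · rw [swap_comm i j] at hlen ⊢
        exact (bruhatLE_mul_swap_or_of_lenP_lt hij hlen hs).imp ih.trans ih.trans

lemma bruhatLE.mul_swap_mul_swap {u v : Perm (Fin n)} (h : bruhatLE n u v) {s₁ s₂ : Fin n}
    (hs : (s₁ : ℕ) + 1 = s₂) (hlen : lenP n v < lenP n (v * swap s₁ s₂)) :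
    bruhatLE n (u * swap s₁ s₂) (v * swap s₁ s₂) :=
  (h.mul_swap_or hs).elim (fun h' => h'.trans_mul_swap (by omega) hlen) id

/-- `w ∈ S_m ⊆ S_n`. -/
def FixesFrom (m : ℕ) (w : Perm (Fin n)) : Prop := ∀ p : Fin n, m ≤ (p : ℕ) → w p = p

namespace FixesFrom

variable {m : ℕ} {w : Perm (Fin n)}

lemma inv (hw : FixesFrom m w) : FixesFrom m w⁻¹ := fun p hp =>
  Perm.inv_eq_iff_eq.mpr (hw p hp).symm

lemma val_lt (hw : FixesFrom m w) {q : Fin n} (hq : (q : ℕ) < m) : (w q : ℕ) < m := by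
  by_contra! h
  have : w q = q := w.injective (hw _ h)
  omega

lemma eq_one (hw : FixesFrom 1 w) : w = 1 := by
  ext p
  by_cases hp : 1 ≤ (p : ℕ)
  · simp [hw p hp]
  · have := hw.val_lt (q := p) (by omega)
    simp only [Perm.coe_one, id_eq]
    omega

lemma of_apply_eq (hw : FixesFrom (m + 1) w) (hm : m < n) (hwm : w ⟨m, hm⟩ = ⟨m, hm⟩) :
    FixesFrom m w := fun p hp => by
  rcases hp.eq_or_lt with h | h
  · rwa [show p = ⟨m, hm⟩ from Fin.ext h.symm]
  · exact hw p h

lemma mul_swap (hw : FixesFrom m w) {p q : Fin n} (hp : (p : ℕ) < m) (hq : (q : ℕ) < m) :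
    FixesFrom m (w * swap p q) := fun r hr => by
  rw [Perm.mul_apply, swap_apply_of_ne_of_ne (Fin.ne_of_val_ne (by omega))
    (Fin.ne_of_val_ne (by omega)), hw r hr]

end FixesFrom

/-- `ℓ` is the top letter `b`, 1-indexed as in the paper. -/
def topInversions (n : ℕ) (w : Perm (Fin n)) (ℓ : ℕ) : Finset (Fin n × Fin n) :=
  univ.filter fun p => p.1 < p.2 ∧ w⁻¹ p.2 < w⁻¹ p.1 ∧ (p.2 : ℕ) + 1 = ℓ

lemma mem_topInversions {w : Perm (Fin n)} {ℓ : ℕ} {p : Fin n × Fin n} :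
    p ∈ topInversions n w ℓ ↔ p.1 < p.2 ∧ w⁻¹ p.2 < w⁻¹ p.1 ∧ (p.2 : ℕ) + 1 = ℓ := by
  simp [topInversions]

/-- In `S_{m+1}`, the inversions topped by the largest letter `m` are the letters to its right. -/
lemma card_topInversions_add_inv_apply {m : ℕ} (hm : m < n) {w : Perm (Fin n)}
    (hw : FixesFrom (m + 1) w) :
    #(topInversions n w (m + 1)) + (w⁻¹ ⟨m, hm⟩ : ℕ) = m := by
  set top : Fin n := ⟨m, hm⟩
  have htop : (top : ℕ) = m := rfl
  have hsnd : ∀ p ∈ topInversions n w (m + 1), p.2 = top := fun p hp =>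
    Fin.ext (by rw [mem_topInversions] at hp; omega)
  have hcard : #(Ioc (w⁻¹ top) top) = #(topInversions n w (m + 1)) := by
    refine card_nbij' (fun q => (w q, top)) (fun p => w⁻¹ p.1) ?_ ?_ ?_ ?_
    · intro q hq
      rw [coe_Ioc, Set.mem_Ioc, Fin.le_def] at hq
      have hne : w q ≠ top := fun h => hq.1.ne (by simp [← h])
      have hlt : (w q : ℕ) < m + 1 := hw.val_lt (by omega)
      simp only [mem_coe, mem_topInversions, Perm.coe_inv, symm_apply_apply]
      exact ⟨Fin.lt_def.mpr <| by have := Fin.val_ne_of_ne hne; omega, hq.1, rfl⟩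
    · intro p hp
      have hp' := mem_topInversions.mp hp
      rw [hsnd p hp] at hp'
      have := hw.inv.val_lt (q := p.1) (by rw [Fin.lt_def] at hp'; omega)
      simp only [coe_Ioc, Set.mem_Ioc, Fin.le_def]
      exact ⟨hp'.2.1, by omega⟩
    · intro q _
      simp
    · intro p hp
      simp [← hsnd p hp]
  rw [← hcard, Fin.card_Ioc]
  have := hw.inv.val_lt (q := top) (by omega)
  omega

lemma topInversions_mul_swap {w : Perm (Fin n)} {q₁ q₂ : Fin n} (hq : (q₁ : ℕ) + 1 = q₂)
    {ℓ : ℕ} (hℓ : ℓ ≤ w q₁) :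
    topInversions n (w * swap q₁ q₂) ℓ = topInversions n w ℓ := by
  ext ⟨a, b⟩
  simp only [mem_topInversions]
  refine and_congr_right fun hab => ?_
  by_cases hbℓ : (b : ℕ) + 1 = ℓ
  swap
  · simp [hbℓ]
  have hne : ∀ c : Fin n, c ≤ b → w⁻¹ c ≠ q₁ := fun c hc h => by
    have : c = w q₁ := by rw [← h]; simp
    rw [Fin.le_def, this] at hc
    omega
  rw [mul_inv_rev, swap_inv, Perm.mul_apply, Perm.mul_apply,
    swap_lt_swap_iff_of_adjacent hq (fun h => hne b le_rfl h.1) (fun h => hne a hab.le h.2)]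

lemma FixesFrom.of_card_topInversions_eq_zero {m : ℕ} (hm : m < n) {w : Perm (Fin n)}
    (hw : FixesFrom (m + 1) w) (h0 : #(topInversions n w (m + 1)) = 0) : FixesFrom m w := by
  have := card_topInversions_add_inv_apply hm hw
  refine hw.of_apply_eq hm (Perm.inv_eq_iff_eq.mp (Fin.ext ?_)).symm
  simp only at this ⊢
  omega

lemma uPerm_succ (n : ℕ) [NeZero n] (ℓ m : ℕ) :
    uPerm n ℓ (m + 1) = uPerm n ℓ m * sT n (ℓ - 1 - m) := by
  simp [uPerm, List.range_succ]

lemma sT_add_one {n : ℕ} [NeZero n] {p : ℕ} (hp : p + 1 < n) :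
    sT n (p + 1) = swap ⟨p, by omega⟩ ⟨p + 1, hp⟩ := by
  simp only [sT, add_tsub_cancel_right]
  congr <;> ext <;> simp [Nat.mod_eq_of_lt, hp, show p < n by omega]

/-- `u_2(x) ⋯ u_{k+1}(x)`, so that `ω(x)` is the prefix with `k = n - 1`. -/
def omegaPrefix (n : ℕ) [NeZero n] (k : ℕ) (x : ℕ → ℕ) : Perm (Fin n) :=
  ((List.range k).map fun t => uPerm n (t + 2) (x (t + 2))).prod

lemma omegaPrefix_succ (n : ℕ) [NeZero n] (k : ℕ) (x : ℕ → ℕ) :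
    omegaPrefix n (k + 1) x = omegaPrefix n k x * uPerm n (k + 2) (x (k + 2)) := by
  simp [omegaPrefix, List.range_succ]

lemma omegaPrefix_congr (n : ℕ) [NeZero n] {k : ℕ} {x y : ℕ → ℕ}
    (h : ∀ ℓ, 2 ≤ ℓ → ℓ ≤ k + 1 → x ℓ = y ℓ) : omegaPrefix n k x = omegaPrefix n k y := by
  unfold omegaPrefix
  congr 1
  refine List.map_congr_left fun t ht => ?_
  rw [h (t + 2) (by omega) (by simp at ht; omega)]

lemma omegaPrefix_succ_eq_mul_sT (n : ℕ) [NeZero n] {k m : ℕ} {x : ℕ → ℕ} (hx : x (k + 2) = m + 1) :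
    omegaPrefix n (k + 1) x =
      omegaPrefix n (k + 1) (Function.update x (k + 2) m) * sT n (k + 1 - m) := by
  rw [omegaPrefix_succ, omegaPrefix_succ, hx, uPerm_succ, Function.update_self,
    omegaPrefix_congr n fun ℓ _ (hℓ : ℓ ≤ k + 1) =>
      (Function.update_of_ne (show ℓ ≠ k + 2 by omega) m x).symm,
    mul_assoc]
  rfl

section MoveTopLetter

variable {m : ℕ} {hm : m < n} {w : Perm (Fin n)} {p q : Fin n}

lemma card_topInversions_mul_swap_add_one (hw : FixesFrom (m + 1) w) (hwp : w p = ⟨m, hm⟩)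
    (hpq : (p : ℕ) + 1 = q) (hq : (q : ℕ) ≤ m) :
    #(topInversions n (w * swap p q) (m + 1)) + 1 = #(topInversions n w (m + 1)) := by
  have h := card_topInversions_add_inv_apply hm hw
  have h' :=
    card_topInversions_add_inv_apply hm (hw.mul_swap (p := p) (q := q) (by omega) (by omega))
  rw [Perm.inv_eq_iff_eq.mpr hwp.symm] at h
  rw [Perm.inv_eq_iff_eq.mpr (show ⟨m, hm⟩ = (w * swap p q) q by simp [hwp])] at h'
  omega

lemma lenP_mul_swap_lt (hw : FixesFrom (m + 1) w) (hwp : w p = ⟨m, hm⟩)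
    (hpq : (p : ℕ) + 1 = q) (hq : (q : ℕ) ≤ m) : lenP n (w * swap p q) < lenP n w := by
  have hlt : (w q : ℕ) < m + 1 := hw.val_lt (by omega)
  have hne : (w q : ℕ) ≠ m := fun h => by
    have := congrArg Fin.val (w.injective (hwp.trans (Fin.ext h.symm))); omega
  have hwq : (w * swap p q) p < (w * swap p q) q := by
    rw [Perm.mul_apply, Perm.mul_apply, swap_apply_left, swap_apply_right, hwp, Fin.lt_def]
    show (w q : ℕ) < m
    omega
  have h := lenP_lt_lenP_mul_swap (Fin.lt_def.mpr (by omega)) hwq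
  rwa [mul_swap_mul_self] at h

end MoveTopLetter

lemma exists_mul_swap_eq_of_card_topInversions_eq_succ {n : ℕ} [NeZero n] {k X : ℕ}
    (hk : k + 2 ≤ n) {w : Perm (Fin n)} (hw : FixesFrom (k + 2) w)
    (hX : #(topInversions n w (k + 2)) = X + 1) :
    ∃ (w' : Perm (Fin n)) (p q : Fin n), (p : ℕ) + 1 = q ∧ w = w' * swap p q ∧
      sT n (k + 1 - X) = swap p q ∧ FixesFrom (k + 2) w' ∧ lenP n w' < lenP n w ∧
      #(topInversions n w' (k + 2)) = X ∧
      ∀ ℓ ≤ k + 1, topInversions n w' ℓ = topInversions n w ℓ := by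
  set p := w⁻¹ ⟨k + 1, by omega⟩
  have hpos : #(topInversions n w (k + 2)) + (p : ℕ) = k + 1 :=
    card_topInversions_add_inv_apply _ hw
  set q : Fin n := ⟨p + 1, by omega⟩
  have hpq : (p : ℕ) + 1 = q := rfl
  have hwp : w p = ⟨k + 1, by omega⟩ := by simp [p]
  have hqk : (q : ℕ) ≤ k + 1 := by simp only [q]; omega
  have hcard : #(topInversions n (w * swap p q) (k + 2)) + 1 = #(topInversions n w (k + 2)) :=
    card_topInversions_mul_swap_add_one hw hwp hpq hqk
  refine ⟨w * swap p q, p, q, hpq, (mul_swap_mul_self p q w).symm, ?_,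
    hw.mul_swap (by omega) (by omega), lenP_mul_swap_lt hw hwp hpq hqk, by omega,
    fun ℓ hℓ => topInversions_mul_swap hpq (by rw [hwp]; exact hℓ)⟩
  rw [show k + 1 - X = p + 1 by omega, sT_add_one (by omega)]

def OmegaPrefixBound (n : ℕ) [NeZero n] (k : ℕ) : Prop :=
  ∀ w : Perm (Fin n), FixesFrom (k + 1) w → ∀ x : ℕ → ℕ,
    (∀ ℓ, 2 ≤ ℓ → ℓ ≤ k + 1 → x ℓ ≤ #(topInversions n w ℓ)) →
      bruhatLE n (omegaPrefix n k x) w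

lemma omegaPrefixBound_succ {n : ℕ} [NeZero n] {k : ℕ} (hk : k + 2 ≤ n)
    (ih : OmegaPrefixBound n k) : OmegaPrefixBound n (k + 1) := by
  intro w hw x hx
  obtain ⟨X, hX⟩ : ∃ X, #(topInversions n w (k + 2)) = X := ⟨_, rfl⟩
  induction X generalizing w x with
  | zero =>
    have hx0 : x (k + 2) = 0 := by have := hx (k + 2) (by omega) le_rfl; omega
    rw [omegaPrefix_succ, hx0, show uPerm n (k + 2) 0 = 1 from rfl, mul_one]
    exact ih w (hw.of_card_topInversions_eq_zero (m := k + 1) (by omega) hX) x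
      fun ℓ h2 hℓ => hx ℓ h2 (by omega)
  | succ X ihX =>
    obtain ⟨w', p, q, hpq, rfl, hs, hw', hlen, hX', hsame⟩ :=
      exists_mul_swap_eq_of_card_topInversions_eq_succ hk hw hX
    have hx' : ∀ y : ℕ → ℕ, y (k + 2) ≤ X → (∀ ℓ ≤ k + 1, y ℓ = x ℓ) →
        ∀ ℓ, 2 ≤ ℓ → ℓ ≤ k + 2 → y ℓ ≤ #(topInversions n w' ℓ) := by
      intro y hyX hyx ℓ h2 hℓ
      rcases hℓ.lt_or_eq with hℓ | rfl
      · rw [hyx ℓ (by omega), hsame ℓ (by omega)]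
        exact hx ℓ h2 hℓ.le
      · omega
    rcases (hx (k + 2) (by omega) le_rfl).lt_or_eq with hlt | heq
    · exact (ihX w' hw' x (hx' x (by omega) fun _ _ => rfl) hX').trans_mul_swap
        (Fin.ne_of_val_ne (by omega)) hlen
    · rw [omegaPrefix_succ_eq_mul_sT n (m := X) (by omega), hs]
      have hy := hx' (Function.update x (k + 2) X) (by simp) fun ℓ hℓ =>
        Function.update_of_ne (show ℓ ≠ k + 2 by omega) _ _
      exact (ihX w' hw' _ hy hX').mul_swap_mul_swap hpq hlen

lemma omegaPrefixBound {n : ℕ} [NeZero n] : ∀ k, k + 1 ≤ n → OmegaPrefixBound n k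
  | 0, _ => fun w hw _ _ => by rw [hw.eq_one]; exact .refl
  | k + 1, hk => omegaPrefixBound_succ hk (omegaPrefixBound k (by omega))

theorem bruhatLE_omegaPerm_of_le_card_topInversions {n : ℕ} [NeZero n] (w : Perm (Fin n))
    {x : ℕ → ℕ} (hx : ∀ ℓ, 2 ≤ ℓ → ℓ ≤ n → x ℓ ≤ #(topInversions n w ℓ)) :
    bruhatLE n (omegaPerm n x) w := by
  have hn : n - 1 + 1 = n := Nat.sub_add_cancel NeZero.one_le
  exact omegaPrefixBound (n - 1) hn.le w (fun p hp => absurd p.isLt (by omega)) x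
    fun ℓ h2 hℓ => hx ℓ h2 (hn ▸ hℓ)

theorem stmt8_general (n : ℕ) [NeZero n] (h : ℕ → ℕ)
    (w : Equiv.Perm (Fin n)) :
    (∀ a b : Fin n, DimPair n h w a b → a < b ∧ w⁻¹ b < w⁻¹ a) ∧
    bruhatLE n
      (omegaPerm n (fun ℓ =>
        Set.ncard {p : Fin n × Fin n | DimPair n h w p.1 p.2 ∧ (p.2 : ℕ) + 1 = ℓ}))
      w := by
  refine ⟨fun a b hab => ⟨hab.1, hab.2.1⟩, bruhatLE_omegaPerm_of_le_card_topInversions w ?_⟩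
  intro ℓ _ _
  have hsub : {p : Fin n × Fin n | DimPair n h w p.1 p.2 ∧ (p.2 : ℕ) + 1 = ℓ} ⊆
      topInversions n w ℓ := fun p ⟨hp, hℓ⟩ => mem_topInversions.mpr ⟨hp.1, hp.2.1, hℓ⟩
  exact (Set.ncard_le_ncard hsub (Finset.finite_toSet _)).trans_eq (Set.ncard_coe_finset _)

/-- The dimension pairs of an `h`-permissible filling `w` form a subset of the
inversions of `w`; consequently, with `x_ℓ` the number of dimension pairs with
top part `ℓ`, the associated permutation `ω(x)` is Bruhat-less than or equal
to `w`. -/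
theorem stmt8 (n : ℕ) [NeZero n] (h : ℕ → ℕ)
    (hH1 : ∀ i, 1 ≤ i → i ≤ n → i ≤ h i ∧ h i ≤ n)
    (hH2 : ∀ i, 1 ≤ i → i + 1 ≤ n → h i ≤ h (i + 1))
    (w : Equiv.Perm (Fin n)) (hperm : IsPermissible n h w) :
    (∀ a b : Fin n, DimPair n h w a b → a < b ∧ w⁻¹ b < w⁻¹ a) ∧
    bruhatLE n
      (omegaPerm n (fun ℓ =>
        Set.ncard {p : Fin n × Fin n | DimPair n h w p.1 p.2 ∧ (p.2 : ℕ) + 1 = ℓ}))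
      w :=
  stmt8_general n h w
end

section
/- Let a ≥ 2, let w be the longest element of the parabolic subgroup of S_n generated by s_1,...,s_a (one-line notation (a+1, a, ..., 2, 1, a+2, ..., n)), and let u be the 312-type permutation with one-line notation (b, b+1, b-1, ..., 2, 1, b+2, ..., n) for some b ≥ 2. Then w ≤ u in Bruhat order if and only if b ≥ a + 1. -/
open Equiv Finset

/-- One-line notation (as a function of the 1-indexed position `i`) of the
312-type fixed point for the interval `[1, a]`:
`(a, a+1, a-1, a-2, …, 2, 1, a+2, a+3, …, n)`. -/
def oneLine312 (a i : ℕ) : ℕ :=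
  if i = 1 then a else if i = 2 then a + 1 else if i ≤ a + 1 then a + 2 - i else i

/-- One-line notation (as a function of the 1-indexed position `i`) of the
231-type fixed point for the interval `[1, a]`:
`(a+1, 1, a, a-1, …, 3, 2, a+2, …, n)`. -/
def oneLine231 (a i : ℕ) : ℕ :=
  if i = 1 then a + 1 else if i = 2 then 1 else if i ≤ a + 1 then a + 3 - i else i

/-- One-line notation (as a function of the 1-indexed position `i`) of the
longest element of the parabolic subgroup generated by `s_1, …, s_a`:
`(a+1, a, …, 2, 1, a+2, …, n)`. -/
def oneLineInv (a i : ℕ) : ℕ := if i ≤ a + 1 then a + 2 - i else i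

/-! The inversions of `u` all live among the first `b + 1` positions, where `w` inverts every
pair once `b ≤ a`; as `w` also inverts the first two positions, `u` is strictly shorter than `w`,
so `w ≰ u`. Conversely, for `b ≥ a + 1`, walk from `w` to `u` by adjacent transpositions that
each create one inversion: sliding the value `a + 2` leftwards from position `a + 2` to position
`1` yields the longest element for `a + 1`; repeat, and stop the final slide, of the value
`b + 1`, at position `2`. -/

section Length

variable {n : ℕ}

def inversions (v : Perm (Fin n)) : Finset (Fin n × Fin n) :=
  univ.filter fun p => p.1 < p.2 ∧ v p.2 < v p.1

@[simp]
lemma mem_inversions {v : Perm (Fin n)} {p : Fin n × Fin n} :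
    p ∈ inversions v ↔ p.1 < p.2 ∧ v p.2 < v p.1 := by
  simp [inversions]

lemma swap_apply_lt_swap_apply {i j p q : Fin n} (hij : (i : ℕ) + 1 = j) (hpq : p < q)
    (hne : (p, q) ≠ (i, j)) : swap i j p < swap i j q := by
  simp only [swap_apply_def]
  rw [Fin.lt_def] at hpq ⊢
  split_ifs <;> simp_all [Fin.ext_iff] <;> omega

lemma lenP_lt_mul_swap {v : Perm (Fin n)} {i j : Fin n} (hij : (i : ℕ) + 1 = j)
    (h : v i < v j) : lenP n v < lenP n (v * swap i j) := by
  set σ := swap i j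
  let e : Fin n × Fin n ↪ Fin n × Fin n := ⟨Prod.map σ σ, σ.injective.prodMap σ.injective⟩
  have hij_mem : (i, j) ∈ inversions (v * σ) := by
    rw [mem_inversions, Fin.lt_def]
    simp only [Perm.mul_apply, σ, swap_apply_left, swap_apply_right]
    exact ⟨by omega, h⟩
  have hmap : (inversions v).map e ⊆ (inversions (v * σ)).erase (i, j) := by
    simp only [subset_iff, mem_map, mem_erase, mem_inversions]
    rintro _ ⟨⟨p, q⟩, ⟨hpq, hinv⟩, rfl⟩
    dsimp only at hpq hinv
    have hne : (p, q) ≠ (i, j) := by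
      rintro ⟨⟩
      exact lt_asymm h hinv
    refine ⟨fun heq => ?_, swap_apply_lt_swap_apply hij hpq hne, ?_⟩
    · simp only [e, Function.Embedding.coeFn_mk, Prod.map, Prod.mk.injEq, σ,
        swap_apply_eq_iff, swap_apply_left, swap_apply_right] at heq
      rw [heq.1, heq.2, Fin.lt_def] at hpq
      omega
    · simpa [e, σ] using hinv
  calc lenP n v = ((inversions v).map e).card := (card_map e).symm
    _ ≤ ((inversions (v * σ)).erase (i, j)).card := card_le_card hmap
    _ < lenP n (v * σ) := card_erase_lt_of_mem hij_mem

lemma lenP_le_of_bruhatLE {v w : Perm (Fin n)} (h : bruhatLE n v w) : lenP n v ≤ lenP n w := by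
  induction h with
  | refl => exact le_rfl
  | tail _ hstep ih => exact ih.trans hstep.2.le

lemma bruhatLE_mul_swap {v : Perm (Fin n)} {i j : Fin n} (hij : (i : ℕ) + 1 = j)
    (h : v i < v j) : bruhatLE n v (v * swap i j) :=
  .single ⟨⟨i, j, fun hij' => by simp [hij'] at hij, rfl⟩, lenP_lt_mul_swap hij h⟩

end Length

section RevInsert

/-- One-line notation, with positions and values counted from `0`, of the reversal
`(m, m - 1, …, 0)` of `{0, …, m}` with the value `m + 1` inserted at position `p`, continued by
the identity. -/
def revInsert (m p i : ℕ) : ℕ :=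
  if i < p then m - i else if i = p then m + 1 else if i ≤ m + 1 then m + 1 - i else i

def IsRevInsert (n m p : ℕ) (v : Perm (Fin n)) : Prop :=
  ∀ i : Fin n, (v i : ℕ) = revInsert m p i

variable {n m p : ℕ} {u v : Perm (Fin n)}

lemma IsRevInsert.eq (hu : IsRevInsert n m p u) (hv : IsRevInsert n m p v) : u = v :=
  Equiv.ext fun i => Fin.ext ((hu i).trans (hv i).symm)

lemma revInsert_zero (m : ℕ) : revInsert m 0 = revInsert (m + 1) (m + 2) := by
  funext i
  simp only [revInsert]
  split_ifs <;> omega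

lemma IsRevInsert.exists_bruhatLE_pred (hv : IsRevInsert n m (p + 1) v) (hp : p ≤ m)
    (hm : m + 2 ≤ n) : ∃ v', IsRevInsert n m p v' ∧ bruhatLE n v v' := by
  let i : Fin n := ⟨p, by omega⟩
  let j : Fin n := ⟨p + 1, by omega⟩
  refine ⟨v * swap i j, fun x => ?_, bruhatLE_mul_swap rfl ?_⟩
  · rw [Perm.mul_apply, swap_apply_def]
    split_ifs with hxi hxj <;> simp only [hv _, revInsert, i, j, Fin.ext_iff] at * <;>
      split_ifs <;> omega
  · rw [Fin.lt_def, hv i, hv j]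
    simp only [revInsert, i, j]
    split_ifs <;> omega

lemma IsRevInsert.exists_bruhatLE_of_le (hv : IsRevInsert n m p v) (hp : p ≤ m + 1)
    (hm : m + 2 ≤ n) {q : ℕ} (hq : q ≤ p) : ∃ v', IsRevInsert n m q v' ∧ bruhatLE n v v' := by
  induction p generalizing v with
  | zero => exact ⟨v, Nat.le_zero.mp hq ▸ hv, .refl⟩
  | succ p ih =>
    rcases hq.eq_or_lt with rfl | hq
    · exact ⟨v, hv, .refl⟩
    obtain ⟨v₁, hv₁, hvv₁⟩ := hv.exists_bruhatLE_pred (by omega) hm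
    obtain ⟨v', hv', hv₁v'⟩ := ih hv₁ (by omega) (by omega)
    exact ⟨v', hv', hvv₁.trans hv₁v'⟩

lemma bruhatLE_of_isRevInsert {m' : ℕ} (hv : IsRevInsert n m (m + 1) v)
    (hu : IsRevInsert n m' 1 u) (hmm' : m ≤ m') (hm' : m' + 2 ≤ n) : bruhatLE n v u := by
  obtain ⟨e, rfl⟩ := Nat.exists_eq_add_of_le hmm'
  induction e generalizing m v with
  | zero =>
    obtain ⟨v', hv', hvv'⟩ := hv.exists_bruhatLE_of_le le_rfl hm' (by omega : 1 ≤ m + 1)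
    exact hv'.eq hu ▸ hvv'
  | succ e ih =>
    obtain ⟨v₁, hv₁, hvv₁⟩ := hv.exists_bruhatLE_of_le le_rfl (by omega) (Nat.zero_le _)
    rw [IsRevInsert, revInsert_zero] at hv₁
    exact hvv₁.trans (ih hv₁ (Nat.add_right_comm m 1 e ▸ hu) (by omega) (by omega))

lemma lenP_lt_of_isRevInsert {m' : ℕ} (hu : IsRevInsert n m' 1 u)
    (hv : IsRevInsert n m (m + 1) v) (hm' : m' < m) (hn : 2 ≤ n) : lenP n u < lenP n v := by
  have hsub : inversions u ⊆ inversions v := by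
    rintro ⟨p, q⟩
    simp only [mem_inversions, Fin.lt_def, hu p, hu q, hv p, hv q, revInsert]
    split_ifs <;> omega
  let i₀ : Fin n := ⟨0, by omega⟩
  let i₁ : Fin n := ⟨1, by omega⟩
  have hv₀₁ : (i₀, i₁) ∈ inversions v := by
    simp only [mem_inversions, Fin.lt_def, hv i₀, hv i₁, revInsert, i₀, i₁]
    split_ifs <;> omega
  have hu₀₁ : (i₀, i₁) ∉ inversions u := by
    simp only [mem_inversions, Fin.lt_def, hu i₀, hu i₁, revInsert, i₀, i₁]
    split_ifs <;> omega
  exact card_lt_card ((ssubset_iff_of_subset hsub).mpr ⟨_, hv₀₁, hu₀₁⟩)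

lemma isRevInsert_of_oneLineInv {a : ℕ}
    (hv : ∀ i : Fin n, (v i : ℕ) + 1 = oneLineInv a ((i : ℕ) + 1)) :
    IsRevInsert n a (a + 1) v := by
  intro i
  have := hv i
  simp only [oneLineInv, revInsert] at this ⊢
  split_ifs at this ⊢ <;> omega

lemma isRevInsert_of_oneLine312 {b : ℕ} (hb : 1 ≤ b)
    (hu : ∀ i : Fin n, (u i : ℕ) + 1 = oneLine312 b ((i : ℕ) + 1)) :
    IsRevInsert n (b - 1) 1 u := by
  intro i
  have := hu i
  simp only [oneLine312, revInsert] at this ⊢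
  split_ifs at this ⊢ <;> omega

end RevInsert

theorem stmt15_general (n a b : ℕ) (hb : 2 ≤ b)
    (hbn : b + 1 ≤ n) (w u : Equiv.Perm (Fin n))
    (hw : ∀ i : Fin n, (w i : ℕ) + 1 = oneLineInv a ((i : ℕ) + 1))
    (hu : ∀ i : Fin n, (u i : ℕ) + 1 = oneLine312 b ((i : ℕ) + 1)) :
    bruhatLE n w u ↔ a + 1 ≤ b := by
  have hw' := isRevInsert_of_oneLineInv hw
  have hu' := isRevInsert_of_oneLine312 (by omega) hu
  refine ⟨fun hwu => ?_, fun hab => bruhatLE_of_isRevInsert hw' hu' (by omega) (by omega)⟩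
  by_contra hab
  exact (lenP_lt_of_isRevInsert hu' hw' (by omega) (by omega)).not_ge (lenP_le_of_bruhatLE hwu)

/-- Let `w` be the longest element of the parabolic subgroup of `S_n` generated
by `s_1, …, s_a` (one-line notation `(a+1, a, …, 2, 1, a+2, …, n)`) and let `u`
be the 312-type permutation with one-line notation
`(b, b+1, b-1, …, 2, 1, b+2, …, n)`.  Then `w ≤ u` in Bruhat order iff
`b ≥ a + 1`. -/
theorem stmt15 (n a b : ℕ) [NeZero n] (ha : 2 ≤ a) (hb : 2 ≤ b)
    (han : a + 1 ≤ n) (hbn : b + 1 ≤ n) (w u : Equiv.Perm (Fin n))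
    (hw : ∀ i : Fin n, (w i : ℕ) + 1 = oneLineInv a ((i : ℕ) + 1))
    (hu : ∀ i : Fin n, (u i : ℕ) + 1 = oneLine312 b ((i : ℕ) + 1)) :
    bruhatLE n w u ↔ a + 1 ≤ b :=
  stmt15_general n a b hb hbn w u hw hu
end
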